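/- arXiv:0707.2141 — 2 statements merged into one kernel-verified Lean document; each statement's English description precedes it below -/
import Mathlib

section
/- The Fredholm index is locally constant on the set of Fredholm operators: if F : X → Y is a Fredholm operator between Banach spaces, there is ε > 0 such that every bounded operator G with ‖G - F‖ < ε is Fredholm with index G = index F. -/
/-!
Split `X = ker F ⊕ X₀` and `Y = range F ⊕ N` with `X₀` closed and `N` finite-dimensional.
The operator `(x, n) ↦ G x + n` from `X₀ × N` to `Y` is an isomorphism for `G = F` (open mapping
theorem), hence, invertibility being an open condition, for every `G` close to `F`. For such a
`G`, the restriction of `G` to `X₀` is injective and `G(X₀)` is a closed complement of `N`; this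
alone makes `G` Fredholm of index `codim X₀ - dim N`, a number that does not depend on `G`.
-/

open Module

/-- A bounded operator between Banach spaces is Fredholm if it has
finite-dimensional kernel, closed range, and finite-dimensional cokernel. -/
def IsFredholm {X Y : Type*} [NormedAddCommGroup X] [NormedSpace ℝ X]
    [NormedAddCommGroup Y] [NormedSpace ℝ Y] (F : X →L[ℝ] Y) : Prop :=
  FiniteDimensional ℝ (LinearMap.ker (F : X →ₗ[ℝ] Y)) ∧
  IsClosed (LinearMap.range (F : X →ₗ[ℝ] Y) : Set Y) ∧
  FiniteDimensional ℝ (Y ⧸ LinearMap.range (F : X →ₗ[ℝ] Y))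

/-- The Fredholm index: `dim ker F - dim coker F`. -/
noncomputable def fredholmIndex {X Y : Type*} [NormedAddCommGroup X] [NormedSpace ℝ X]
    [NormedAddCommGroup Y] [NormedSpace ℝ Y] (F : X →L[ℝ] Y) : ℤ :=
  (finrank ℝ (LinearMap.ker (F : X →ₗ[ℝ] Y)) : ℤ) -
    (finrank ℝ (Y ⧸ LinearMap.range (F : X →ₗ[ℝ] Y)) : ℤ)

namespace LinearMap

section Ring

variable {R M M' : Type*} [Ring R] [AddCommGroup M] [Module R M] [AddCommGroup M'] [Module R M']

theorem injective_coprod_subtype_iff (f : M →ₗ[R] M') (p : Submodule R M) (q : Submodule R M') :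
    Function.Injective ((f ∘ₗ p.subtype).coprod q.subtype) ↔
      Disjoint p (ker f) ∧ Disjoint (p.map f) q := by
  simp only [injective_iff_map_eq_zero, Submodule.disjoint_def, Prod.forall, Subtype.forall,
    Submodule.mem_map, coprod_apply, comp_apply, Submodule.subtype_apply, mem_ker]
  constructor
  · intro h
    refine ⟨fun x hx hfx => ?_, ?_⟩
    · simpa [Prod.mk_eq_zero] using h x hx 0 q.zero_mem (by simp [hfx])
    · rintro _ ⟨x, hx, rfl⟩ hq
      simpa using (Prod.mk_eq_zero.1 (h x hx (-f x) (q.neg_mem hq) (by simp))).2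
  · rintro ⟨hker, hmap⟩ x hx n hn hsum
    have hfx : f x = 0 :=
      hmap _ ⟨x, hx, rfl⟩ (by rw [eq_neg_of_add_eq_zero_left hsum]; exact q.neg_mem hn)
    have hn0 : n = 0 := by simpa [hfx] using hsum
    simp [hker x hx hfx, hn0]

theorem bijective_coprod_subtype_iff (f : M →ₗ[R] M') (p : Submodule R M) (q : Submodule R M') :
    Function.Bijective ((f ∘ₗ p.subtype).coprod q.subtype) ↔
      Disjoint p (ker f) ∧ IsCompl (p.map f) q := by
  rw [Function.Bijective, injective_coprod_subtype_iff, ← range_eq_top, range_coprod, range_comp,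
    Submodule.range_subtype, Submodule.range_subtype, isCompl_iff, codisjoint_iff, and_assoc]

end Ring

section DivisionRing

variable {k V W : Type*} [DivisionRing k] [AddCommGroup V] [Module k V] [AddCommGroup W]
  [Module k W]

/-- With `f` injective on `p`, the map `V ⧸ p → W ⧸ f(p)` induced by `f` has the same kernel
and cokernel as `f`, and rank–nullity for this map between finite-dimensional spaces computes the
index of `f`. -/
theorem finrank_ker_sub_finrank_coker_eq (f : V →ₗ[k] W) (p : Submodule k V)
    [FiniteDimensional k (V ⧸ p)] [FiniteDimensional k (W ⧸ p.map f)] (hp : Disjoint p (ker f)) :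
    FiniteDimensional k (ker f) ∧ FiniteDimensional k (W ⧸ range f) ∧
      (finrank k (ker f) : ℤ) - finrank k (W ⧸ range f) =
        finrank k (V ⧸ p) - finrank k (W ⧸ p.map f) := by
  set g := p.mapQ (p.map f) f (Submodule.le_comap_map f p)
  have hinj : Function.Injective (p.mkQ ∘ₗ (ker f).subtype) := by
    rw [← ker_eq_bot, ker_comp, Submodule.ker_mkQ]
    exact Submodule.disjoint_iff_comap_eq_bot.mp hp.symm
  have hker : ker g = range (p.mkQ ∘ₗ (ker f).subtype) := by
    rw [Submodule.ker_mapQ, Submodule.comap_map_eq, Submodule.map_sup, Submodule.mkQ_map_self,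
      bot_sup_eq, range_comp, Submodule.range_subtype]
  have hcoker : ((W ⧸ p.map f) ⧸ range g) ≃ₗ[k] W ⧸ range f := by
    rw [Submodule.range_mapQ]
    exact Submodule.quotientQuotientEquivQuotient _ _ map_le_range
  have hrank_g := finrank_range_add_finrank_ker g
  have hrank_coker := Submodule.finrank_quotient_add_finrank (range g)
  rw [hker, finrank_range_of_inj hinj] at hrank_g
  refine ⟨.of_injective _ hinj, hcoker.finiteDimensional, ?_⟩
  rw [← hcoker.finrank_eq]
  omega

end DivisionRing

end LinearMap

open Topology in
theorem eventually_exists_equiv_eq_coprod_subtypeL {𝕜 X Y : Type*} [NontriviallyNormedField 𝕜]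
    [NormedAddCommGroup X] [NormedSpace 𝕜 X] [NormedAddCommGroup Y] [NormedSpace 𝕜 Y]
    {F : X →L[𝕜] Y} {X₀ : Submodule 𝕜 X} {N : Submodule 𝕜 Y} [CompleteSpace X₀] [CompleteSpace N]
    (e : (X₀ × N) ≃L[𝕜] Y) (he : (e : X₀ × N →L[𝕜] Y) = (F.comp X₀.subtypeL).coprod N.subtypeL) :
    ∀ᶠ G in 𝓝 F, ∃ e' : (X₀ × N) ≃L[𝕜] Y,
      (e' : X₀ × N →L[𝕜] Y) = (G.comp X₀.subtypeL).coprod N.subtypeL := by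
  have hcont : Continuous fun G : X →L[𝕜] Y => (G.comp X₀.subtypeL).coprod N.subtypeL := by
    fun_prop
  exact hcont.tendsto F (he ▸ e.nhds)

theorem isClosed_map_of_equiv_eq_coprod_subtypeL {R X Y : Type*} [Ring R] [TopologicalSpace X]
    [AddCommGroup X] [Module R X] [TopologicalSpace Y] [AddCommGroup Y] [Module R Y]
    [ContinuousAdd Y] [T1Space Y] {H : X →L[R] Y} {X₀ : Submodule R X} {N : Submodule R Y}
    (e : (X₀ × N) ≃L[R] Y) (he : (e : X₀ × N →L[R] Y) = (H.comp X₀.subtypeL).coprod N.subtypeL) :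
    IsClosed (X₀.map (H : X →ₗ[R] Y) : Set Y) := by
  have hmap : X₀.map (H : X →ₗ[R] Y) =
      ((⊤ : Submodule R X₀).prod ⊥).map ((e : X₀ × N →L[R] Y) : X₀ × N →ₗ[R] Y) := by
    rw [he, ContinuousLinearMap.coe_coprod, LinearMap.coprod_map_prod, Submodule.map_bot,
      sup_bot_eq, Submodule.map_top, ContinuousLinearMap.toLinearMap_comp,
      Submodule.toLinearMap_subtypeL, LinearMap.range_comp, Submodule.range_subtype]
  rw [hmap]
  exact e.toHomeomorph.isClosed_image.2 (isClosed_univ.prod isClosed_singleton)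

theorem isFredholm_and_fredholmIndex_eq_of_equiv_eq_coprod_subtypeL {X Y : Type*}
    [NormedAddCommGroup X] [NormedSpace ℝ X] [NormedAddCommGroup Y] [NormedSpace ℝ Y]
    {H : X →L[ℝ] Y} {X₀ : Submodule ℝ X} {N : Submodule ℝ Y} [FiniteDimensional ℝ (X ⧸ X₀)]
    [FiniteDimensional ℝ N] (e : (X₀ × N) ≃L[ℝ] Y)
    (he : (e : X₀ × N →L[ℝ] Y) = (H.comp X₀.subtypeL).coprod N.subtypeL) :
    IsFredholm H ∧ fredholmIndex H = finrank ℝ (X ⧸ X₀) - finrank ℝ N := by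
  obtain ⟨hdisj, hcompl⟩ := ((H : X →ₗ[ℝ] Y).bijective_coprod_subtype_iff X₀ N).1 <| by
    change Function.Bijective ((H.comp X₀.subtypeL).coprod N.subtypeL)
    rw [← he]
    exact e.bijective
  have hquot := X₀.map (H : X →ₗ[ℝ] Y) |>.quotientEquivOfIsCompl N hcompl
  have : FiniteDimensional ℝ (Y ⧸ X₀.map (H : X →ₗ[ℝ] Y)) := hquot.symm.finiteDimensional
  obtain ⟨hker, hcoker, hindex⟩ := (H : X →ₗ[ℝ] Y).finrank_ker_sub_finrank_coker_eq X₀ hdisj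
  refine ⟨⟨hker, ?_, hcoker⟩, ?_⟩
  · exact LinearMap.isClosed_range_of_isClosed_map_of_finiteDimensional_quotient
      (isClosed_map_of_equiv_eq_coprod_subtypeL e he)
  · rw [fredholmIndex, hindex, hquot.finrank_eq]

/-- The Fredholm index is locally constant: every bounded operator sufficiently
close in operator norm to a Fredholm operator is Fredholm with the same index. -/
theorem fredholmIndex_locally_constant
    {X Y : Type*} [NormedAddCommGroup X] [NormedSpace ℝ X] [CompleteSpace X]
    [NormedAddCommGroup Y] [NormedSpace ℝ Y] [CompleteSpace Y]
    (F : X →L[ℝ] Y) (hF : IsFredholm F) :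
    ∃ ε > 0, ∀ G : X →L[ℝ] Y, ‖G - F‖ < ε →
      IsFredholm G ∧ fredholmIndex G = fredholmIndex F := by
  obtain ⟨hker, hclosed, hcoker⟩ := hF
  obtain ⟨X₀, hX₀, hKX₀⟩ := Submodule.ClosedComplemented.exists_isClosed_isCompl
    (.of_finiteDimensional (LinearMap.ker (F : X →ₗ[ℝ] Y)))
  obtain ⟨N, -, hRN⟩ := Submodule.ClosedComplemented.exists_isClosed_isCompl
    (.of_finiteDimensional_quotient hclosed)
  have : FiniteDimensional ℝ (X ⧸ X₀) :=
    (X₀.quotientEquivOfIsCompl _ hKX₀.symm).symm.finiteDimensional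
  have : FiniteDimensional ℝ N := (Submodule.quotientEquivOfIsCompl _ N hRN).finiteDimensional
  have : CompleteSpace X₀ := hX₀.completeSpace_coe
  have hmapF : X₀.map (F : X →ₗ[ℝ] Y) = LinearMap.range (F : X →ₗ[ℝ] Y) := by
    rw [LinearMap.range_eq_map, ← hKX₀.sup_eq_top, Submodule.map_sup,
      LinearMap.le_ker_iff_map.1 le_rfl, bot_sup_eq]
  have hbij := ((F : X →ₗ[ℝ] Y).bijective_coprod_subtype_iff X₀ N).2
    ⟨hKX₀.symm.disjoint, hmapF ▸ hRN⟩
  set eF := ContinuousLinearEquiv.ofBijective ((F.comp X₀.subtypeL).coprod N.subtypeL)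
    (LinearMap.ker_eq_bot.2 hbij.1) (LinearMap.range_eq_top.2 hbij.2)
  obtain ⟨ε, hε, hball⟩ :=
    Metric.eventually_nhds_iff.1 (eventually_exists_equiv_eq_coprod_subtypeL eF rfl)
  refine ⟨ε, hε, fun G hG => ?_⟩
  obtain ⟨eG, heG⟩ := hball (by rwa [dist_eq_norm])
  obtain ⟨hGfred, hGindex⟩ := isFredholm_and_fredholmIndex_eq_of_equiv_eq_coprod_subtypeL eG heG
  obtain ⟨-, hFindex⟩ := isFredholm_and_fredholmIndex_eq_of_equiv_eq_coprod_subtypeL eF rfl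
  exact ⟨hGfred, hGindex.trans hFindex.symm⟩
end

section
/- In the ring ℤ[p,q]/(p^{n+1} - q) with deg p = 2 and deg q = 2n+2, the homogeneous component of each even degree 2k (k ≥ 0) is free of rank 1, and all odd-degree components vanish. -/
/-!
Modulo `p ^ (n + 1) - q` every monomial `c • p ^ a * q ^ b` equals `c • p ^ (a + (n + 1) * b)`,
and its weight is `2 * (a + (n + 1) * b)`. So odd-degree components are zero (all weights are
even), and the degree-`2k` component is spanned by the class of `p ^ k`. That span is free of
rank one because `p ↦ t`, `q ↦ t ^ (n + 1)` induces a map to `R[t]` sending the class to `t ^ k`.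
-/

open MvPolynomial

namespace MvPolynomial

section Divisibility

variable {R σ : Type*} [CommSemiring R] {w : σ → ℕ} {e d : ℕ}

lemma dvd_weight_of_forall_dvd (hw : ∀ i, e ∣ w i) (m : σ →₀ ℕ) :
    e ∣ Finsupp.weight w m := by
  rw [Finsupp.weight_apply]
  exact Finset.dvd_sum fun i _ => Dvd.dvd.mul_left (hw i) _

lemma weightedHomogeneousSubmodule_eq_bot_of_not_dvd (hw : ∀ i, e ∣ w i) (hd : ¬ e ∣ d) :
    weightedHomogeneousSubmodule R w d = ⊥ :=
  (Submodule.eq_bot_iff _).mpr fun _ hφ =>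
    hφ.eq_zero_of_no_monomials fun m hm => hd (hm ▸ dvd_weight_of_forall_dvd hw m)

end Divisibility

lemma weight_fin_two (a b : ℕ) (m : Fin 2 →₀ ℕ) :
    Finsupp.weight ![a, b] m = m 0 * a + m 1 * b := by
  simp [Finsupp.weight_apply, Finsupp.sum_fintype, Fin.sum_univ_two]

section Relation

variable {R : Type*} [CommRing R] {n : ℕ} {I : Ideal (MvPolynomial (Fin 2) R)}

lemma mk_monomial_of_relation_mem (hI : X 0 ^ (n + 1) - X 1 ∈ I) (m : Fin 2 →₀ ℕ) (c : R) :
    Ideal.Quotient.mk I (monomial m c) =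
      c • Ideal.Quotient.mk I (X 0) ^ (m 0 + (n + 1) * m 1) := by
  have hX1 : Ideal.Quotient.mk I (X 1) = Ideal.Quotient.mk I (X 0) ^ (n + 1) := by
    rw [← map_pow, eq_comm, Ideal.Quotient.mk_eq_mk_iff_sub_mem]
    exact hI
  rw [monomial_eq, Finsupp.prod_fintype _ _ (by simp), Fin.prod_univ_two, map_mul, map_mul,
    map_pow, map_pow, hX1, ← pow_mul, pow_add, mul_comm (n + 1)]
  exact (Algebra.smul_def (A := MvPolynomial (Fin 2) R ⧸ I) c _).symm

lemma map_mk_weightedHomogeneousSubmodule (hI : X 0 ^ (n + 1) - X 1 ∈ I) (k : ℕ) :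
    (weightedHomogeneousSubmodule R ![2, 2 * n + 2] (2 * k)).map
        (Ideal.Quotient.mkₐ R I).toLinearMap =
      Submodule.span R {Ideal.Quotient.mkₐ R I (X 0 ^ k)} := by
  refine le_antisymm ?_ ?_
  · rintro _ ⟨φ, hφ, rfl⟩
    change IsWeightedHomogeneous _ φ _ at hφ
    induction hφ using IsWeightedHomogeneous.induction_on with
    | zero => simp
    | add p q _ _ hp hq => simpa using add_mem hp hq
    | monomial m c hm =>
      rw [weight_fin_two] at hm
      have hk : m 0 + (n + 1) * m 1 = k := by linarith
      simpa [mk_monomial_of_relation_mem hI, hk] using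
        Submodule.smul_mem _ c (Submodule.mem_span_singleton_self _)
  · rw [Submodule.span_le, Set.singleton_subset_iff]
    refine ⟨X 0 ^ k, ?_, rfl⟩
    convert (isWeightedHomogeneous_X R ![2, 2 * n + 2] 0).pow k using 1
    simp [mul_comm]

lemma toSpanSingleton_mk_X_pow_injective (k : ℕ) :
    Function.Injective (LinearMap.toSpanSingleton R _
      (Ideal.Quotient.mkₐ R (Ideal.span {X 0 ^ (n + 1) - X 1})
        (X 0 ^ k : MvPolynomial (Fin 2) R))) := by
  set ev : MvPolynomial (Fin 2) R →ₐ[R] Polynomial R :=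
    aeval ![Polynomial.X, Polynomial.X ^ (n + 1)]
  have hev : ∀ φ ∈ Ideal.span {X 0 ^ (n + 1) - X 1}, ev φ = 0 := by
    intro φ hφ
    obtain ⟨ψ, rfl⟩ := Ideal.mem_span_singleton'.mp hφ
    simp [ev]
  have hX : Ideal.Quotient.liftₐ _ ev hev (Ideal.Quotient.mkₐ R _ (X 0 ^ k)) =
      Polynomial.X ^ k := by
    rw [← AlgHom.comp_apply, Ideal.Quotient.liftₐ_comp]
    simp [ev]
  intro a b hab
  have h := congrArg (Ideal.Quotient.liftₐ _ ev hev) hab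
  simp only [LinearMap.toSpanSingleton_apply, map_smul, hX] at h
  simpa using congrArg (Polynomial.coeff · k) h

end Relation

end MvPolynomial

/-- In the graded ring `ℤ[p,q]/(p^{n+1} - q)` with `deg p = 2`, `deg q = 2n + 2`,
the homogeneous component of each even degree `2k` is free of rank one, generated
by the image of `p^k`, and every odd-degree component vanishes. This is the
computation `QH^k(ℂPⁿ) ≅ ℤ` for even `k ≥ 0` and `QH^k(ℂPⁿ) = 0` for odd `k`. -/
theorem quantum_cohomology_CPn_graded_components
    (n : ℕ)
    (I : Ideal (MvPolynomial (Fin 2) ℤ))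
    (hI : I = Ideal.span {(X 0 : MvPolynomial (Fin 2) ℤ) ^ (n + 1) - X 1})
    (w : Fin 2 → ℕ) (hw : w = ![2, 2 * n + 2]) :
    (∀ k : ℕ,
        Submodule.map (Ideal.Quotient.mkₐ ℤ I).toLinearMap
            (weightedHomogeneousSubmodule ℤ w (2 * k)) =
          Submodule.span ℤ {Ideal.Quotient.mkₐ ℤ I ((X 0 : MvPolynomial (Fin 2) ℤ) ^ k)} ∧
        Nonempty
          ((Submodule.map (Ideal.Quotient.mkₐ ℤ I).toLinearMap
              (weightedHomogeneousSubmodule ℤ w (2 * k))) ≃ₗ[ℤ] ℤ)) ∧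
    (∀ d : ℕ, Odd d →
        Submodule.map (Ideal.Quotient.mkₐ ℤ I).toLinearMap
            (weightedHomogeneousSubmodule ℤ w d) = ⊥) := by
  subst hI hw
  have hrel := Ideal.mem_span_singleton_self ((X 0 : MvPolynomial (Fin 2) ℤ) ^ (n + 1) - X 1)
  refine ⟨fun k => ⟨map_mk_weightedHomogeneousSubmodule hrel k, ?_⟩, fun d hd => ?_⟩
  · rw [map_mk_weightedHomogeneousSubmodule hrel k, ← LinearMap.range_toSpanSingleton]
    exact ⟨(LinearEquiv.ofInjective _ (toSpanSingleton_mk_X_pow_injective k)).symm⟩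
  · have hw : ∀ i, 2 ∣ (![2, 2 * n + 2] : Fin 2 → ℕ) i := by
      intro i
      fin_cases i <;> simp [← mul_add_one]
    rw [weightedHomogeneousSubmodule_eq_bot_of_not_dvd hw hd.not_two_dvd_nat, Submodule.map_bot]
end
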